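/- arXiv:0708.4406 — 4 statements merged into one kernel-verified Lean document; each statement's English description precedes it below -/
import Mathlib

section
/- Let t be an infinite word over a finite alphabet A and let z ∈ A. If z is separating for t (every length-2 factor of t contains the letter z) and t begins with z, then there exists an infinite word t¹ over A with t = Ψ_z(t¹), where Ψ_z is the morphism fixing z and sending each other letter x to zx. -/
/-- The prefix of length `k` of an infinite word `w : ℕ → A`. -/
def pref {A : Type*} (w : ℕ → A) (k : ℕ) : List A := (List.range k).map w

/-- `u` is a (finite) factor of the infinite word `w`. -/
def IsFactor {A : Type*} (w : ℕ → A) (u : List A) : Prop :=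
  ∃ i : ℕ, u = (List.range u.length).map (fun j => w (i + j))

/-- Prepend a letter to an infinite word. -/
def consW {A : Type*} (a : A) (s : ℕ → A) : ℕ → A := fun n => match n with
  | 0 => a
  | n + 1 => s n

/-- Concatenation of a finite word with an infinite word. -/
def catW {A : Type*} (u : List A) (w : ℕ → A) : ℕ → A := fun n =>
  if h : n < u.length then u.get ⟨n, h⟩ else w (n - u.length)

/-- `u` is the lexicographically smallest factor of `w` of length `k`,
w.r.t. the strict order `lt` on letters. -/
def IsMinFactor {A : Type*} (lt : A → A → Prop) (w : ℕ → A) (k : ℕ) (u : List A) : Prop :=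
  IsFactor w u ∧ u.length = k ∧
    ∀ v, IsFactor w v → v.length = k → u = v ∨ List.Lex lt u v

/-- `u` is the lexicographically greatest factor of `w` of length `k`. -/
def IsMaxFactor {A : Type*} (lt : A → A → Prop) (w : ℕ → A) (k : ℕ) (u : List A) : Prop :=
  IsFactor w u ∧ u.length = k ∧
    ∀ v, IsFactor w v → v.length = k → u = v ∨ List.Lex lt v u

/-- `m = min(w)`: every length-`k` prefix of `m` is the lexicographically
smallest factor of `w` of length `k`. -/
def IsMinWord {A : Type*} (lt : A → A → Prop) (w m : ℕ → A) : Prop :=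
  ∀ k : ℕ, IsMinFactor lt w k (pref m k)

/-- `m = max(w)`. -/
def IsMaxWord {A : Type*} (lt : A → A → Prop) (w m : ℕ → A) : Prop :=
  ∀ k : ℕ, IsMaxFactor lt w k (pref m k)

/-- The letter `z` is separating for `t`: every length-2 factor of `t` contains `z`. -/
def Separating {A : Type*} (z : A) (t : ℕ → A) : Prop :=
  ∀ u, IsFactor t u → u.length = 2 → z ∈ u

/-- The episturmian morphism `Ψ_z` on finite words: `z ↦ z`, `x ↦ zx` for `x ≠ z`. -/
def psiL {A : Type*} [DecidableEq A] (z : A) (u : List A) : List A :=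
  u.flatMap (fun x => if x = z then [z] else [z, x])

/-- `t = Ψ_z(y)` for infinite words: the `Ψ_z`-image of every prefix of `y`
is a prefix of `t`. -/
def PsiImage {A : Type*} [DecidableEq A] (z : A) (y t : ℕ → A) : Prop :=
  ∀ n : ℕ, psiL z (pref y n) = pref t (psiL z (pref y n)).length

/-- `u` is a left special factor of `w`. -/
def LeftSpecial {A : Type*} (w : ℕ → A) (u : List A) : Prop :=
  ∃ a b : A, a ≠ b ∧ IsFactor w (a :: u) ∧ IsFactor w (b :: u)

/-- `u` is a right special factor of `w`. -/
def RightSpecial {A : Type*} (w : ℕ → A) (u : List A) : Prop :=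
  ∃ a b : A, a ≠ b ∧ IsFactor w (u ++ [a]) ∧ IsFactor w (u ++ [b])

/-- `w` is a standard episturmian word: factors closed under reversal and
every left special factor is a prefix. -/
def StdEpisturmian {A : Type*} (w : ℕ → A) : Prop :=
  (∀ u, IsFactor w u → IsFactor w u.reverse) ∧
  (∀ u, LeftSpecial w u → u = pref w u.length)

/-- `w` is an `A`-strict standard episturmian word (standard Arnoux-Rauzy sequence):
standard episturmian and every prefix has every letter as a left extension. -/
def StrictStdEpisturmian {A : Type*} (w : ℕ → A) : Prop :=
  StdEpisturmian w ∧ ∀ (n : ℕ) (a : A), IsFactor w (a :: pref w n)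

/-- `w` is episturmian: factors closed under reversal and at most one right
special factor of each length. -/
def Episturmian {A : Type*} (w : ℕ → A) : Prop :=
  (∀ u, IsFactor w u → IsFactor w u.reverse) ∧
  (∀ u v, RightSpecial w u → RightSpecial w v → u.length = v.length → u = v)

/-- `w` is an `A`-strict episturmian word: it has the same set of factors as some
`A`-strict standard episturmian word. -/
def StrictEpisturmian {A : Type*} (w : ℕ → A) : Prop :=
  ∃ s : ℕ → A, StrictStdEpisturmian s ∧ ∀ u, IsFactor w u ↔ IsFactor s u

/-- `t` is fine: there is an infinite word `s` such that for every total order on the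
alphabet and every letter `a` minimal for that order, `min(t) = a·s`. -/
def Fine {A : Type*} (t : ℕ → A) : Prop :=
  ∃ s : ℕ → A, ∀ (l : LinearOrder A) (a : A), (∀ b, l.le a b) →
    IsMinWord l.lt t (consW a s)

/-- If `z` is separating for `t` and `t` begins with `z`, then `t = Ψ_z(t¹)`
for some infinite word `t¹`. -/
theorem stmt_2 {A : Type*} [DecidableEq A] (t : ℕ → A) (z : A)
    (hsep : Separating z t) (h0 : t 0 = z) :
    ∃ t1 : ℕ → A, PsiImage z t1 t := by
  classical
  -- position of the start of the n-th block
  let pos : ℕ → ℕ := fun n => Nat.rec 0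
    (fun n p => p + (if t (p + 1) = z then 1 else 2)) n
  have pos0 : pos 0 = 0 := rfl
  have posS : ∀ n, pos (n+1) = pos n + (if t (pos n + 1) = z then 1 else 2) :=
    fun n => rfl
  -- every block starts with z
  have hz : ∀ n, t (pos n) = z := by
    intro n
    induction n with
    | zero => simpa [pos0] using h0
    | succ n ih =>
      rw [posS]
      by_cases h : t (pos n + 1) = z
      · simpa [h] using h
      · simp only [h, if_false]
        have hf : IsFactor t [t (pos n + 1), t (pos n + 2)] := by
          exact ⟨pos n + 1, by simp [List.range_succ]⟩
        have := hsep _ hf rfl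
        rcases List.mem_pair.mp this with h1 | h2
        · exact absurd h1.symm h
        · exact h2.symm
  set t1 : ℕ → A := fun n => if t (pos n + 1) = z then z else t (pos n + 1) with ht1
  have prefS : ∀ (w : ℕ → A) (n : ℕ), pref w (n+1) = pref w n ++ [w n] := by
    intro w n; simp [pref, List.range_succ]
  have key : ∀ n, psiL z (pref t1 n) = pref t (pos n) := by
    intro n
    induction n with
    | zero => simp [pref, pos0, psiL]
    | succ n ih =>
      rw [prefS, psiL, List.flatMap_append, ← psiL, ih]
      by_cases h : t (pos n + 1) = z
      · have ht : t1 n = z := by simp [ht1, h]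
        rw [posS, if_pos h, prefS, hz n]
        simp [psiL, ht]
      · have ht : t1 n = t (pos n + 1) := by simp [ht1, h]
        rw [posS, if_neg h]
        have : pos n + 2 = (pos n + 1) + 1 := by ring
        rw [this, prefS, prefS, hz n]
        simp [psiL, ht, h]
  refine ⟨t1, fun n => ?_⟩
  have hlen : (psiL z (pref t1 n)).length = pos n := by
    rw [key]; simp [pref]
  rw [hlen, key]
end

section
/- Let A be a finite totally ordered alphabet with |A| ≥ 2, z ∈ A, and suppose t, s, t¹, s¹ are infinite words over A with t = Ψ_z(t¹), s = Ψ_z(s¹), and z occurring in t¹. Let a be the minimal letter of A. Then min(t¹) = a·s¹ if and only if min(t) = a·s. -/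
/-!
Write `x ≤ y` for the lexicographic order on infinite words. Then `m = min(w)` says exactly that
every prefix of `m` is a factor of `w` and that `m ≤ shiftW w i` for every suffix `shiftW w i` of
`w`. Now `Ψ_z` is strictly increasing for this order, and it sends the suffix of `y` at `n` to the
suffix of `Ψ_z(y)` at the start of the block `Ψ_z(y n)`. Moreover `Ψ_z(u)` is determined by `u`,
and the first `2k` letters of `Ψ_z(u)` determine the first `k` letters of `u`.

If `a = z`, then `a·s = Ψ_z(a·s¹)`. A suffix of `t` starting inside a block `z x` begins with
`x > z`, so it is larger than `a·s`. The remaining suffixes of `t` are the images of the suffixes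
of `t¹`. If `a ≠ z`, every occurrence of `a` in `t` is the second letter of a block `z a`. The
suffix of `t` after it is the image of the suffix of `t¹` after the corresponding `a`.
-/

section Words

variable {A : Type*}

def shiftW (w : ℕ → A) (i : ℕ) : ℕ → A := fun j => w (i + j)

@[simp] lemma shiftW_apply (w : ℕ → A) (i j : ℕ) : shiftW w i j = w (i + j) := rfl

lemma shiftW_eq_consW (w : ℕ → A) (p : ℕ) : shiftW w p = consW (w p) (shiftW w (p + 1)) := by
  funext n
  cases n with
  | zero => rfl
  | succ n => exact congrArg w (by omega)

@[simp] lemma length_pref (w : ℕ → A) (k : ℕ) : (pref w k).length = k := by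
  simp [pref]

lemma pref_succ (w : ℕ → A) (k : ℕ) : pref w (k + 1) = pref w k ++ [w k] := by
  simp [pref, List.range_succ]

lemma pref_add (w : ℕ → A) (m n : ℕ) : pref w (m + n) = pref w m ++ pref (shiftW w m) n := by
  simp [pref, List.range_add, List.map_map, Function.comp_def]

lemma pref_consW_succ (a : A) (x : ℕ → A) (k : ℕ) :
    pref (consW a x) (k + 1) = a :: pref x k := by
  simp [pref, consW, List.range_succ_eq_map, List.map_map]

lemma pref_eq_pref_iff {x y : ℕ → A} {k : ℕ} :
    pref x k = pref y k ↔ ∀ j < k, x j = y j := by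
  simp [pref, List.map_inj_left]

lemma pref_eq_pref_of_le {x y : ℕ → A} {m n : ℕ} (h : pref x n = pref y n) (hmn : m ≤ n) :
    pref x m = pref y m :=
  pref_eq_pref_iff.2 fun j hj => pref_eq_pref_iff.1 h j (by omega)

lemma isFactor_pref_iff {w m : ℕ → A} {k : ℕ} :
    IsFactor w (pref m k) ↔ ∃ i, pref m k = pref (shiftW w i) k := by
  simp only [IsFactor, length_pref]; rfl

lemma isFactor_pref_zero (w m : ℕ → A) : IsFactor w (pref m 0) := ⟨0, rfl⟩

lemma isFactor_pref_consW_succ_iff {w x : ℕ → A} {a : A} {k : ℕ} :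
    IsFactor w (pref (consW a x) (k + 1)) ↔
      ∃ p, w p = a ∧ pref x k = pref (shiftW w (p + 1)) k := by
  rw [isFactor_pref_iff]
  constructor
  · rintro ⟨p, hp⟩
    rw [shiftW_eq_consW, pref_consW_succ, pref_consW_succ, List.cons.injEq] at hp
    exact ⟨p, hp.1.symm, hp.2⟩
  · rintro ⟨p, rfl, hp⟩
    exact ⟨p, by rw [shiftW_eq_consW, pref_consW_succ, pref_consW_succ, hp]⟩

lemma forall_isFactor_pref_consW_iff_exists {w x : ℕ → A} {a : A} :
    (∀ k, IsFactor w (pref (consW a x) k)) ↔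
      ∀ k, ∃ p, w p = a ∧ pref x k = pref (shiftW w (p + 1)) k := by
  rw [← Nat.and_forall_add_one]
  simp only [isFactor_pref_zero, true_and, isFactor_pref_consW_succ_iff]

section Lex

variable [LinearOrder A]

lemma pref_lt_pref {x y : ℕ → A} {d k : ℕ} (hagree : ∀ j < d, x j = y j) (hlt : x d < y d)
    (hdk : d < k) : pref x k < pref y k := by
  obtain ⟨m, rfl⟩ : ∃ m, k = d + (m + 1) := ⟨k - (d + 1), by omega⟩
  rw [pref_add x, pref_add y, pref_eq_pref_iff.2 hagree, shiftW_eq_consW x, shiftW_eq_consW y,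
    pref_consW_succ, pref_consW_succ]
  exact List.Lex.append_left _ (List.Lex.rel hlt) _

lemma toLex_le_toLex_iff_pref_le {x y : ℕ → A} :
    toLex x ≤ toLex y ↔ ∀ k, pref x k ≤ pref y k := by
  constructor
  · intro h k
    obtain rfl | ⟨d, hagree, hlt⟩ := h.eq_or_lt
    · exact le_rfl
    · rcases lt_or_ge d k with hdk | hkd
      · exact (pref_lt_pref hagree hlt hdk).le
      · exact (pref_eq_pref_iff.2 fun j hj => hagree j (by omega)).le
  · intro h
    by_contra! hlt
    obtain ⟨d, hagree, hlt⟩ := hlt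
    exact (pref_lt_pref hagree hlt d.lt_succ_self).not_ge (h (d + 1))

lemma toLex_lt_toLex_of_apply_zero_lt {x y : ℕ → A} (h : x 0 < y 0) : toLex x < toLex y :=
  ⟨0, fun _ hj => absurd hj (Nat.not_lt_zero _), h⟩

lemma consW_le_consW_iff {a : A} {x y : ℕ → A} :
    toLex (consW a x) ≤ toLex (consW a y) ↔ toLex x ≤ toLex y := by
  have hcons (u v : List A) : a :: u ≤ a :: v ↔ u ≤ v := by
    simp only [le_iff_eq_or_lt, List.cons.injEq, true_and]
    exact or_congr_right List.lex_cons_iff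
  rw [toLex_le_toLex_iff_pref_le, toLex_le_toLex_iff_pref_le, ← Nat.and_forall_add_one]
  simp only [pref_consW_succ, hcons]
  exact and_iff_right_of_imp fun _ => le_rfl

lemma consW_le_shiftW_iff {a : A} (ha : ∀ b, a ≤ b) {x w : ℕ → A} {p : ℕ} :
    toLex (consW a x) ≤ toLex (shiftW w p) ↔
      (w p = a → toLex x ≤ toLex (shiftW w (p + 1))) := by
  rw [shiftW_eq_consW]
  rcases eq_or_ne (w p) a with hp | hp
  · simp only [hp, consW_le_consW_iff, forall_const]
  · simp only [hp, false_imp_iff, iff_true]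
    exact (toLex_lt_toLex_of_apply_zero_lt ((ha _).lt_of_ne' hp)).le

lemma isMinWord_iff {w m : ℕ → A} :
    IsMinWord (· < ·) w m ↔
      (∀ k, IsFactor w (pref m k)) ∧ ∀ i, toLex m ≤ toLex (shiftW w i) := by
  have hle (k : ℕ) :
      (∀ v, IsFactor w v → v.length = k →
          pref m k = v ∨ List.Lex (· < ·) (pref m k) v) ↔
        ∀ i, pref m k ≤ pref (shiftW w i) k := by
    constructor
    · intro h i
      exact le_iff_eq_or_lt.2 (h _ (isFactor_pref_iff.2 ⟨i, rfl⟩) (length_pref _ _))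
    · rintro h v ⟨i, hv⟩ rfl
      exact le_iff_eq_or_lt.1 ((h i).trans_eq hv.symm)
  simp only [IsMinWord, IsMinFactor, length_pref, true_and, hle, forall_and,
    toLex_le_toLex_iff_pref_le]
  exact and_congr_right' forall_comm

end Lex

section Psi

variable [DecidableEq A] {z : A}

lemma psiL_append (z : A) (u v : List A) : psiL z (u ++ v) = psiL z u ++ psiL z v :=
  List.flatMap_append

/-- The position in `Ψ_z(y)` at which the block `Ψ_z(y n)` starts. -/
def psiPos (z : A) (y : ℕ → A) (n : ℕ) : ℕ := (psiL z (pref y n)).length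

@[simp] lemma psiPos_zero (y : ℕ → A) : psiPos z y 0 = 0 := rfl

lemma psiPos_succ (y : ℕ → A) (n : ℕ) :
    psiPos z y (n + 1) = psiPos z y n + if y n = z then 1 else 2 := by
  by_cases h : y n = z <;> simp [psiPos, psiL, pref_succ, h]

lemma psiPos_succ_of_ne {y : ℕ → A} {n : ℕ} (h : y n ≠ z) :
    psiPos z y (n + 1) = psiPos z y n + 1 + 1 := by
  rw [psiPos_succ, if_neg h]

lemma le_psiPos (y : ℕ → A) (n : ℕ) : n ≤ psiPos z y n := by
  induction n with
  | zero => simp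
  | succ n ih => rw [psiPos_succ]; split <;> omega

lemma psiPos_le (y : ℕ → A) (n : ℕ) : psiPos z y n ≤ 2 * n := by
  induction n with
  | zero => simp
  | succ n ih => rw [psiPos_succ]; split <;> omega

lemma psiPos_add (y : ℕ → A) (n m : ℕ) :
    psiPos z y (n + m) = psiPos z y n + psiPos z (shiftW y n) m := by
  simp only [psiPos, pref_add, psiL_append, List.length_append]

lemma psiPos_congr {y y' : ℕ → A} {n : ℕ} (h : pref y n = pref y' n) :
    psiPos z y n = psiPos z y' n := by
  rw [psiPos, psiPos, h]

lemma exists_psiPos_le_lt (y : ℕ → A) (p : ℕ) :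
    ∃ n, psiPos z y n ≤ p ∧ p < psiPos z y (n + 1) := by
  induction p with
  | zero => exact ⟨0, le_rfl, by rw [psiPos_succ]; split <;> simp⟩
  | succ p ih =>
    obtain ⟨n, hle, hlt⟩ := ih
    by_cases h : p + 1 < psiPos z y (n + 1)
    · exact ⟨n, by omega, h⟩
    · refine ⟨n + 1, by omega, ?_⟩
      rw [psiPos_succ (n := n + 1)]
      split <;> omega

lemma exists_psiPos_eq_or (y : ℕ → A) (p : ℕ) :
    ∃ n, p = psiPos z y n ∨ (p = psiPos z y n + 1 ∧ y n ≠ z) := by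
  obtain ⟨n, hle, hlt⟩ := exists_psiPos_le_lt (z := z) y p
  rw [psiPos_succ] at hlt
  refine ⟨n, ?_⟩
  split_ifs at hlt with h
  · omega
  · rcases hle.eq_or_lt with hp | hp
    · exact Or.inl hp.symm
    · exact Or.inr ⟨by omega, h⟩

namespace PsiImage

variable {y w : ℕ → A}

lemma pref_psiPos (hw : PsiImage z y w) (n : ℕ) : pref w (psiPos z y n) = psiL z (pref y n) :=
  (hw n).symm

lemma apply_zero (hw : PsiImage z y w) : w 0 = z := by
  have h := hw 1
  simp only [pref, psiL, List.range_one, List.map_cons, List.map_nil, List.flatMap_cons,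
    List.flatMap_nil, List.append_nil] at h
  split at h <;> simpa [List.range_succ] using congrArg List.head? h.symm

lemma shift_psiPos (hw : PsiImage z y w) (n : ℕ) :
    PsiImage z (shiftW y n) (shiftW w (psiPos z y n)) := by
  intro m
  have h := hw.pref_psiPos (n + m)
  rw [psiPos_add, pref_add, hw.pref_psiPos, pref_add, psiL_append] at h
  exact (List.append_cancel_left h).symm

lemma apply_psiPos (hw : PsiImage z y w) (n : ℕ) : w (psiPos z y n) = z :=
  (hw.shift_psiPos n).apply_zero

lemma apply_one (hw : PsiImage z y w) : w 1 = y 0 := by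
  by_cases h0 : y 0 = z
  · have h1 : psiPos z y 1 = 1 := by rw [psiPos_succ, if_pos h0]; rfl
    rw [← h1, hw.apply_psiPos, h0]
  · have h := hw 1
    simp [pref, psiL, List.range_succ, h0] at h
    exact h.2.symm

lemma apply_psiPos_add_one (hw : PsiImage z y w) (n : ℕ) : w (psiPos z y n + 1) = y n := by
  simpa using (hw.shift_psiPos n).apply_one

lemma exists_psiPos_eq_of_apply_eq (hw : PsiImage z y w) {p : ℕ} (hp : w p = z) :
    ∃ n, psiPos z y n = p := by
  obtain ⟨n, rfl | ⟨rfl, hne⟩⟩ := exists_psiPos_eq_or (z := z) y p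
  · exact ⟨n, rfl⟩
  · exact absurd ((hw.apply_psiPos_add_one n).symm.trans hp) hne

lemma exists_psiPos_add_one_eq_of_apply_eq (hw : PsiImage z y w) {p : ℕ} {b : A} (hp : w p = b)
    (hb : b ≠ z) : ∃ n, y n = b ∧ psiPos z y n + 1 = p := by
  obtain ⟨n, rfl | ⟨rfl, -⟩⟩ := exists_psiPos_eq_or (z := z) y p
  · exact absurd ((hw.apply_psiPos n).symm.trans hp).symm hb
  · exact ⟨n, (hw.apply_psiPos_add_one n).symm.trans hp, rfl⟩

lemma consW_self (hw : PsiImage z y w) : PsiImage z (consW z y) (consW z w) := by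
  intro n
  cases n with
  | zero => rfl
  | succ n =>
    have h : psiL z (pref (consW z y) (n + 1)) = z :: psiL z (pref y n) := by
      rw [pref_consW_succ]; simp [psiL]
    rw [h, List.length_cons, pref_consW_succ, ← hw n]

variable {y' w' : ℕ → A}

lemma pref_psiPos_add_one_eq (hw : PsiImage z y w) (hw' : PsiImage z y' w') {n : ℕ}
    (h : pref y n = pref y' n) : pref w (psiPos z y n + 1) = pref w' (psiPos z y n + 1) := by
  rw [pref_succ, pref_succ, hw.pref_psiPos, hw.apply_psiPos, psiPos_congr h, hw'.pref_psiPos,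
    hw'.apply_psiPos, h]

lemma pref_eq_of_pref_eq (hw : PsiImage z y w) (hw' : PsiImage z y' w') {n : ℕ}
    (h : pref y n = pref y' n) : pref w n = pref w' n :=
  pref_eq_pref_of_le (pref_psiPos_add_one_eq hw hw' h) ((le_psiPos y n).trans (Nat.le_succ _))

lemma pref_eq_of_pref_two_mul_eq (hw : PsiImage z y w) (hw' : PsiImage z y' w') {n : ℕ}
    (h : pref w (2 * n) = pref w' (2 * n)) : pref y n = pref y' n := by
  suffices ∀ j ≤ n, pref y j = pref y' j from this n le_rfl
  intro j
  induction j with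
  | zero => intro _; rfl
  | succ j ih =>
    intro hj
    have hpref := ih (by omega)
    have hlt : psiPos z y j + 1 < 2 * n := by have := psiPos_le (z := z) y j; omega
    have hyj : y j = y' j := by
      rw [← hw.apply_psiPos_add_one, ← hw'.apply_psiPos_add_one, ← psiPos_congr hpref]
      exact pref_eq_pref_iff.1 h _ hlt
    rw [pref_succ, pref_succ, hpref, hyj]

lemma eq_of_psiImage (hw : PsiImage z y w) (hw' : PsiImage z y w') : w = w' :=
  funext fun p => pref_eq_pref_iff.1 (pref_eq_of_pref_eq hw hw' (n := p + 1) rfl) p p.lt_succ_self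

variable {x v : ℕ → A}

lemma forall_isFactor_pref_iff (hw : PsiImage z y w) (hx : PsiImage z x v) :
    (∀ k, IsFactor y (pref x k)) ↔ ∀ k, IsFactor w (pref v k) := by
  simp only [isFactor_pref_iff]
  constructor
  · intro h k
    obtain ⟨i, hi⟩ := h k
    exact ⟨psiPos z y i, pref_eq_of_pref_eq hx (hw.shift_psiPos i) hi⟩
  · intro h k
    obtain ⟨p, hp⟩ := h (2 * k + 1)
    have hpz : w p = z := by
      simpa [hx.apply_zero] using (pref_eq_pref_iff.1 hp 0 (by omega)).symm
    obtain ⟨i, rfl⟩ := hw.exists_psiPos_eq_of_apply_eq hpz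
    exact ⟨i, pref_eq_of_pref_two_mul_eq hx (hw.shift_psiPos i)
      (pref_eq_pref_of_le hp (by omega))⟩

lemma forall_isFactor_pref_consW_iff {a : A} (haz : a ≠ z) (hw : PsiImage z y w)
    (hx : PsiImage z x v) :
    (∀ k, IsFactor y (pref (consW a x) k)) ↔ ∀ k, IsFactor w (pref (consW a v) k) := by
  rw [forall_isFactor_pref_consW_iff_exists, forall_isFactor_pref_consW_iff_exists]
  constructor
  · intro h k
    obtain ⟨i, hi, hpref⟩ := h k
    refine ⟨psiPos z y i + 1, hi ▸ hw.apply_psiPos_add_one i, ?_⟩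
    rw [← psiPos_succ_of_ne (hi.symm ▸ haz)]
    exact pref_eq_of_pref_eq hx (hw.shift_psiPos (i + 1)) hpref
  · intro h k
    obtain ⟨p, hp, hpref⟩ := h (2 * k)
    obtain ⟨i, hi, rfl⟩ := hw.exists_psiPos_add_one_eq_of_apply_eq hp haz
    refine ⟨i, hi, pref_eq_of_pref_two_mul_eq hx (hw.shift_psiPos (i + 1)) ?_⟩
    rwa [psiPos_succ_of_ne (hi.symm ▸ haz)]

end PsiImage

end Psi

section PsiOrder

variable [LinearOrder A] {z : A} {y y' w w' x v : ℕ → A}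

namespace PsiImage

lemma toLex_lt_toLex (hw : PsiImage z y w) (hw' : PsiImage z y' w') (h : toLex y < toLex y') :
    toLex w < toLex w' := by
  obtain ⟨d, hagree, hlt⟩ := h
  have hd : pref y d = pref y' d := pref_eq_pref_iff.2 hagree
  refine ⟨psiPos z y d + 1, pref_eq_pref_iff.1 (pref_psiPos_add_one_eq hw hw' hd), ?_⟩
  change w _ < w' _
  rwa [hw.apply_psiPos_add_one, psiPos_congr hd, hw'.apply_psiPos_add_one]

lemma toLex_le_toLex_iff (hw : PsiImage z y w) (hw' : PsiImage z y' w') :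
    toLex w ≤ toLex w' ↔ toLex y ≤ toLex y' := by
  refine ⟨fun h => not_lt.1 fun hlt => (toLex_lt_toLex hw' hw hlt).not_ge h, fun h => ?_⟩
  obtain h | h := h.eq_or_lt
  · rw [eq_of_psiImage hw (toLex_inj.1 h ▸ hw')]
  · exact (toLex_lt_toLex hw hw' h).le

lemma forall_le_shiftW_iff (hz : ∀ b, z ≤ b) (hw : PsiImage z y w) (hx : PsiImage z x v) :
    (∀ i, toLex x ≤ toLex (shiftW y i)) ↔ ∀ p, toLex v ≤ toLex (shiftW w p) := by
  constructor
  · intro h p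
    obtain ⟨i, rfl | ⟨rfl, hne⟩⟩ := exists_psiPos_eq_or (z := z) y p
    · exact (hx.toLex_le_toLex_iff (hw.shift_psiPos i)).2 (h i)
    · refine (toLex_lt_toLex_of_apply_zero_lt ?_).le
      rw [hx.apply_zero, shiftW_apply, add_zero, hw.apply_psiPos_add_one]
      exact (hz _).lt_of_ne' hne
  · intro h i
    exact (hx.toLex_le_toLex_iff (hw.shift_psiPos i)).1 (h _)

lemma forall_consW_le_shiftW_iff {a : A} (ha : ∀ b, a ≤ b) (haz : a ≠ z) (hw : PsiImage z y w)
    (hx : PsiImage z x v) :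
    (∀ i, toLex (consW a x) ≤ toLex (shiftW y i)) ↔
      ∀ p, toLex (consW a v) ≤ toLex (shiftW w p) := by
  simp only [consW_le_shiftW_iff ha]
  constructor
  · intro h p hp
    obtain ⟨i, hi, rfl⟩ := hw.exists_psiPos_add_one_eq_of_apply_eq hp haz
    rw [← psiPos_succ_of_ne (hi.symm ▸ haz), hx.toLex_le_toLex_iff (hw.shift_psiPos _)]
    exact h i hi
  · intro h i hi
    have := h (psiPos z y i + 1) (hi ▸ hw.apply_psiPos_add_one i)
    rwa [← psiPos_succ_of_ne (hi.symm ▸ haz), hx.toLex_le_toLex_iff (hw.shift_psiPos _)] at this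

lemma isMinWord_iff_isMinWord (hz : ∀ b, z ≤ b) (hw : PsiImage z y w) (hx : PsiImage z x v) :
    IsMinWord (· < ·) y x ↔ IsMinWord (· < ·) w v := by
  rw [isMinWord_iff, isMinWord_iff, hw.forall_isFactor_pref_iff hx, hw.forall_le_shiftW_iff hz hx]

lemma isMinWord_consW_iff_isMinWord_consW {a : A} (ha : ∀ b, a ≤ b) (haz : a ≠ z)
    (hw : PsiImage z y w) (hx : PsiImage z x v) :
    IsMinWord (· < ·) y (consW a x) ↔ IsMinWord (· < ·) w (consW a v) := by
  rw [isMinWord_iff, isMinWord_iff, hw.forall_isFactor_pref_consW_iff haz hx,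
    hw.forall_consW_le_shiftW_iff ha haz hx]

end PsiImage

end PsiOrder

end Words

theorem stmt_5_general {A : Type*} [LinearOrder A] (z a : A) (ha : ∀ b : A, a ≤ b)
    (t t1 s s1 : ℕ → A) (ht : PsiImage z t1 t) (hs : PsiImage z s1 s) :
    IsMinWord (· < ·) t1 (consW a s1) ↔ IsMinWord (· < ·) t (consW a s) := by
  rcases eq_or_ne a z with rfl | haz
  · exact ht.isMinWord_iff_isMinWord ha hs.consW_self
  · exact ht.isMinWord_consW_iff_isMinWord_consW ha haz hs

/-- Key Lemma: with `t = Ψ_z(t¹)`, `s = Ψ_z(s¹)`, `z` occurring in `t¹`, and `a` the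
minimal letter: `min(t¹) = a·s¹` iff `min(t) = a·s`. -/
theorem stmt_5 {A : Type*} [LinearOrder A] [Fintype A] (hcard : 2 ≤ Fintype.card A)
    (z a : A) (ha : ∀ b : A, a ≤ b) (t t1 s s1 : ℕ → A)
    (ht : PsiImage z t1 t) (hs : PsiImage z s1 s) (hz : ∃ i : ℕ, t1 i = z) :
    IsMinWord (· < ·) t1 (consW a s1) ↔ IsMinWord (· < ·) t (consW a s) :=
  stmt_5_general z a ha t t1 s s1 ht hs
end

section
/- Let t be an infinite word over a finite alphabet A, fine with witness s, and let z be a letter such that s begins with z. Then z is separating for t: every length-2 factor of t contains the letter z. -/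
/-- If `t` is fine with witness `s` and `z` is the first letter of `s`, then `z` is
separating for `t`. -/
theorem stmt_14 {A : Type*} [Fintype A] (t s : ℕ → A)
    (h : ∀ (l : LinearOrder A) (a : A), (∀ b, l.le a b) → IsMinWord l.lt t (consW a s))
    (z : A) (hz : s 0 = z) : Separating z t := by
  classical
  intro u hu hlen
  by_contra hzu
  obtain ⟨a, b, rfl⟩ := List.length_eq_two.mp hlen
  simp only [List.mem_cons, List.not_mem_nil, or_false, not_or] at hzu
  obtain ⟨hza, hzb⟩ := hzu
  -- build a linear order where a is minimal and z is large
  set e := (Fintype.equivFin A) with he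
  set f : A → ℕ := fun c => if c = a then 0 else if c = b then 1 else 2 + e c with hf
  have hfa : f a = 0 := by simp [hf]
  have hfb : f b ≤ 1 := by by_cases hba : b = a <;> simp [hf, hba]
  have hfz : 2 ≤ f z := by
    simp [hf, hza, hzb]
  have hinj : Function.Injective f := by
    intro x y hxy
    simp only [hf] at hxy
    split_ifs at hxy <;>
      first
        | (subst_vars; rfl)
        | omega
        | exact e.injective (Fin.val_injective (by omega))
  let l : LinearOrder A := LinearOrder.lift' f hinj
  have hmin : ∀ c, l.le a c := by
    intro c
    show f a ≤ f c
    simp [hfa]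
  have hm := (h l a hmin 2).2.2 [a, b] hu hlen
  have hpref : pref (consW a s) 2 = [a, z] := by
    simp [pref, consW, hz, List.range_succ]
  rw [hpref] at hm
  rcases hm with hm | hm
  · simp only [List.cons.injEq] at hm; exact hzb hm.2.1
  · cases hm with
    | rel h1 =>
        have : f a < f a := h1
        omega
    | cons h2 =>
        cases h2 with
        | rel h3 =>
            have : f z < f b := h3
            omega
        | cons h4 => cases h4
end

section
/- Let t be an infinite word over A that is fine with witness s, and let z be the first letter of s. If t does not begin with z, then the word t' = z·t satisfies min(t') = min(t) = a·s for every letter a ∈ A and order on A making a minimal; that is, t' is also fine with the same witness s. -/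
lemma pref_succ_s15 {A : Type*} (w : ℕ → A) (m : ℕ) :
    pref w (m + 1) = w 0 :: pref (fun n => w (n + 1)) m := by
  simp [pref, List.range_succ_eq_map, List.map_map, Function.comp]

lemma pref_consW {A : Type*} (a : A) (s : ℕ → A) (m : ℕ) :
    pref (consW a s) (m + 1) = a :: pref s m := by
  rw [pref_succ_s15]
  rfl

lemma isFactor_consW_of_isFactor {A : Type*} (z : A) (t : ℕ → A) (u : List A)
    (h : IsFactor t u) : IsFactor (consW z t) u := by
  obtain ⟨i, hi⟩ := h
  refine ⟨i + 1, hi.trans (List.map_congr_left fun x _ => ?_)⟩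
  have : i + 1 + x = (i + x) + 1 := by omega
  rw [this]; rfl

/-- If `t` is fine with witness `s`, `z` is the first letter of `s`, and `t` does not
begin with `z`, then `z·t` is also fine with the same witness `s`. -/
theorem stmt_15 {A : Type*} [Fintype A] (t s : ℕ → A)
    (h : ∀ (l : LinearOrder A) (a : A), (∀ b, l.le a b) → IsMinWord l.lt t (consW a s))
    (z : A) (hz : s 0 = z) (ht : t 0 ≠ z) :
    ∀ (l : LinearOrder A) (a : A), (∀ b, l.le a b) →
      IsMinWord l.lt (consW z t) (consW a s) := by
  intro l a ha k
  obtain ⟨⟨i, hfac⟩, hlen, hminle⟩ := h l a ha k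
  refine ⟨isFactor_consW_of_isFactor z t _ ⟨i, hfac⟩, hlen, ?_⟩
  intro v hv hvlen
  obtain ⟨j, hj⟩ := hv
  cases j with
  | succ j =>
    apply hminle _ _ hvlen
    refine ⟨j, hj.trans (List.map_congr_left fun x _ => ?_)⟩
    have : j + 1 + x = (j + x) + 1 := by omega
    rw [this]; rfl
  | zero =>
    -- v = pref (consW z t) k
    have hv' : v = pref (consW z t) k := by
      rw [hj, hvlen]; simp [pref]
    cases k with
    | zero => left; simp [hv', pref]
    | succ m =>
      rw [hv', pref_consW, pref_consW]
      by_cases haz : a = z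
      · subst haz
        cases m with
        | zero => left; rfl
        | succ m' =>
          right
          apply List.Lex.cons
          rw [pref_succ_s15 s, pref_succ_s15 t, hz]
          exact List.Lex.rel (lt_of_le_of_ne (ha (t 0)) (Ne.symm ht))
      · right
        exact List.Lex.rel (lt_of_le_of_ne (ha z) haz)
end
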